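/- Let 0 < α ≤ β and let g : [0,∞) → ℝ be non-increasing and Lipschitz with 0 < g(t) ≤ 1 for all t. Define F(r,s,ξ,η) := ‖ξ‖ + g(‖ξ‖)‖P_s η‖ + ‖r P_s η + s⊗ξ‖ and QF(r,s,ξ,η) := inf{ ∫_Q F(r,s, ξ+∇φ(y), η+∇ψ(y)) dy : φ : ℝ² → ℝ and ψ : ℝ² → ℝ³ Lipschitz, vanishing outside the open unit cube Q := (−1/2,1/2)² }. Then there exists a constant c > 0, depending only on α, β, and the Lipschitz constant of g, such that for all r, r̄ ∈ [α,β], all s, s̄ ∈ S², all ξ, ξ̄ ∈ ℝ², all η ∈ ℝ^{3×2} with sᵀη = 0, and all η̄ ∈ ℝ^{3×2} with s̄ᵀη̄ = 0, one has |QF(r,s,ξ,η) − QF(r̄,s̄,ξ̄,η̄)| ≤ c‖η−η̄‖ + c(|r−r̄| + ‖s−s̄‖ + ‖ξ−ξ̄‖)(1 + ‖ξ‖ + ‖ξ̄‖ + ‖η‖ + ‖η̄‖). -/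

import Mathlib

open MeasureTheory

noncomputable section

abbrev E2 : Type := EuclideanSpace ℝ (Fin 2)
abbrev E3 : Type := EuclideanSpace ℝ (Fin 3)
abbrev E32 : Type := EuclideanSpace ℝ (Fin 3 × Fin 2)

/-- The tensor product `s ⊗ ξ`, viewed as a 3×2 matrix endowed with the
Frobenius (Euclidean) norm. -/
def tens (s : E3) (ξ : E2) : E32 := WithLp.toLp 2 (fun p : Fin 3 × Fin 2 => s p.1 * ξ p.2)

/-- The orthogonal projection `P_s η = (I - s sᵀ) η` of a 3×2 matrix, columnwise,
onto the tangent plane `T_s(S²)`. -/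
def Pproj (s : E3) (η : E32) : E32 :=
  WithLp.toLp 2 (fun p : Fin 3 × Fin 2 => η p - s p.1 * ∑ i : Fin 3, s i * η (i, p.2))

/-- The modified integrand
`F(r,s,ξ,η) = ‖ξ‖ + g(‖ξ‖)‖P_s η‖ + ‖r P_s η + s⊗ξ‖`. -/
def Fdens (g : ℝ → ℝ) (r : ℝ) (s : E3) (ξ : E2) (η : E32) : ℝ :=
  ‖ξ‖ + g ‖ξ‖ * ‖Pproj s η‖ + ‖r • Pproj s η + tens s ξ‖

/-- The open unit cube `Q = (-1/2, 1/2)²`. -/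
def cubeQ : Set E2 := {y | ∀ j, y j ∈ Set.Ioo (-(1/2) : ℝ) (1/2)}

/-- The gradient `∇φ(y) ∈ ℝ²` of a scalar function `φ : ℝ² → ℝ`. -/
def gradv (φ : E2 → ℝ) (y : E2) : E2 :=
  WithLp.toLp 2 (fun j => fderiv ℝ φ y (EuclideanSpace.single j 1))

/-- The gradient `∇ψ(y) ∈ ℝ^{3×2}` of a vector-valued function `ψ : ℝ² → ℝ³`. -/
def gradm (ψ : E2 → E3) (y : E2) : E32 :=
  WithLp.toLp 2 (fun p : Fin 3 × Fin 2 => fderiv ℝ ψ y (EuclideanSpace.single p.2 1) p.1)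

/-- The quasiconvex envelope `QF(r,s,ξ,η)` of the modified integrand `F`:
the infimum of `∫_Q F(r,s,ξ+∇φ,η+∇ψ)` over Lipschitz `φ, ψ` vanishing
outside the unit cube `Q`. -/
def QF (g : ℝ → ℝ) (r : ℝ) (s : E3) (ξ : E2) (η : E32) : ℝ :=
  sInf {v : ℝ | ∃ φ : E2 → ℝ, ∃ ψ : E2 → E3,
    (∃ K : NNReal, LipschitzWith K φ) ∧ (∃ K : NNReal, LipschitzWith K ψ) ∧
    (∀ y ∉ cubeQ, φ y = 0) ∧ (∀ y ∉ cubeQ, ψ y = 0) ∧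
    v = ∫ y in cubeQ, Fdens g r s (ξ + gradv φ y) (η + gradm ψ y)}

/-!
Given a competitor `(φ, ψ)` for `QF(r, s, ξ, η)`, use `(φ, R ∘ ψ)` for `QF(r̄, s̄, ξ̄, η̄)`, where
`R` is a linear isometry of `ℝ³` (a product of two reflections) with `R s = s̄` that moves each
vector tangent at `s` by at most `2‖s - s̄‖` times its length. Rotating `ψ` is forced: `F`
controls only the tangential part `P_s ∇ψ`, not `∇ψ` itself. Acting columnwise, `R` carries `P_s`
to `P_s̄` and `s ⊗ ·` to `s̄ ⊗ ·`, so pointwise the two integrands differ by at most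
`(Lip(g) ‖ξ - ξ̄‖ + |r - r̄|) ‖P_s(η + ∇ψ)‖ + (1 + β)(‖η - η̄‖ + 2‖s - s̄‖‖η‖) + 2‖ξ - ξ̄‖`,
while `α ‖P_s(η + ∇ψ)‖ ≤ F`. Integrating over the unit cube gives
`QF(r̄, s̄, ξ̄, η̄) ≤ (1 + (Lip(g) + 1) δ / α) QF(r, s, ξ, η) + O(‖η - η̄‖ + δ (1 + ‖ξ‖ + ‖η‖))`
with `δ = |r - r̄| + ‖s - s̄‖ + ‖ξ - ξ̄‖`, and `QF(r, s, ξ, η) ≤ F(r, s, ξ, η) = O(1 + ‖ξ‖ + ‖η‖)`.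
-/

open scoped RealInnerProductSpace
open Set

section InnerProductSpace

variable {E : Type*} [NormedAddCommGroup E] [InnerProductSpace ℝ E]

lemma norm_le_norm_add_of_inner_eq_zero {a b : E} (h : ⟪a, b⟫ = 0) : ‖a‖ ≤ ‖a + b‖ := by
  have := norm_add_sq_eq_norm_sq_add_norm_sq_real h
  nlinarith [norm_nonneg a, norm_nonneg (a + b), norm_nonneg b]

lemma abs_inner_add_le_of_inner_eq_zero {s sb v : E} (hs : ‖s‖ = 1) (hsb : ‖sb‖ = 1)
    (hv : ⟪s, v⟫ = 0) : |⟪s + sb, v⟫| ≤ ‖s - sb‖ * ‖s + sb‖ * ‖v‖ := by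
  -- One of `‖s + sb‖`, `‖s - sb‖` is at least `1`, and `⟪s + sb, v⟫ = ⟪sb - s, v⟫`.
  have hsum : ‖s + sb‖ ^ 2 + ‖s - sb‖ ^ 2 = 4 := by
    rw [norm_add_sq_real, norm_sub_sq_real, hs, hsb]; ring
  have hdiff : |⟪s + sb, v⟫| ≤ ‖s - sb‖ * ‖v‖ := by
    have : ⟪s + sb, v⟫ = ⟪sb - s, v⟫ := by rw [inner_add_left, inner_sub_left, hv]; ring
    rw [this, norm_sub_rev]
    exact abs_real_inner_le_norm _ _
  have hadd : |⟪s + sb, v⟫| ≤ ‖s + sb‖ * ‖v‖ := abs_real_inner_le_norm _ _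
  rcases le_or_gt 1 ‖s + sb‖ with h | h
  · nlinarith [mul_nonneg (mul_nonneg (sub_nonneg.2 h) (norm_nonneg (s - sb))) (norm_nonneg v)]
  · have : 1 ≤ ‖s - sb‖ := by nlinarith [norm_nonneg (s - sb), norm_nonneg (s + sb)]
    nlinarith [mul_nonneg (mul_nonneg (sub_nonneg.2 this) (norm_nonneg (s + sb))) (norm_nonneg v)]

lemma exists_linearIsometryEquiv_apply_eq {s sb : E} (hs : ‖s‖ = 1) (hsb : ‖sb‖ = 1) :
    ∃ R : E ≃ₗᵢ[ℝ] E, R s = sb ∧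
      ∀ v, ⟪s, v⟫ = 0 → ‖R v - v‖ ≤ 2 * ‖s - sb‖ * ‖v‖ := by
  refine ⟨(ℝ ∙ s)ᗮ.reflection.trans (ℝ ∙ (-s - sb))ᗮ.reflection, ?_, fun v hv => ?_⟩
  · rw [LinearIsometryEquiv.trans_apply, Submodule.reflection_orthogonalComplement_singleton_eq_neg,
      Submodule.reflection_sub (by rw [norm_neg, hs, hsb])]
  have hRv : (ℝ ∙ s)ᗮ.reflection.trans (ℝ ∙ (-s - sb))ᗮ.reflection v - v
      = (2 * (⟪s + sb, v⟫ / ‖s + sb‖ ^ 2)) • -(s + sb) := by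
    rw [LinearIsometryEquiv.trans_apply, Submodule.reflection_mem_subspace_eq_self
      (Submodule.mem_orthogonal_singleton_iff_inner_right.2 hv),
      Submodule.reflection_orthogonal_apply, Submodule.reflection_singleton_apply,
      show -s - sb = -(s + sb) by abel, inner_neg_left, norm_neg]
    simp only [RCLike.ofReal_real_eq_id, id_eq]
    module
  rw [hRv, norm_smul, norm_neg]
  rcases eq_or_ne (s + sb) 0 with hw | hw
  · simp only [hw, norm_zero, mul_zero]; positivity
  have hw' : 0 < ‖s + sb‖ := norm_pos_iff.2 hw
  calc ‖2 * (⟪s + sb, v⟫ / ‖s + sb‖ ^ 2)‖ * ‖s + sb‖ = 2 * |⟪s + sb, v⟫| / ‖s + sb‖ := by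
        rw [Real.norm_eq_abs, abs_mul, abs_div, abs_two, abs_of_pos (pow_pos hw' 2)]
        field_simp
    _ ≤ 2 * (‖s - sb‖ * ‖s + sb‖ * ‖v‖) / ‖s + sb‖ := by
        gcongr; exact abs_inner_add_le_of_inner_eq_zero hs hsb hv
    _ = 2 * ‖s - sb‖ * ‖v‖ := by field_simp

end InnerProductSpace

def cols : E32 ≃ₗᵢ[ℝ] PiLp 2 (fun _ : Fin 2 => E3) :=
  (LinearIsometryEquiv.piLpCongrLeft 2 ℝ ℝ
      ((Equiv.prodComm _ _).trans (Equiv.sigmaEquivProd (Fin 2) (Fin 3)).symm)).trans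
    (LinearIsometryEquiv.piLpCurry ℝ 2 (fun _ _ => ℝ))

@[simp] lemma cols_apply (m : E32) (j : Fin 2) (i : Fin 3) : cols m j i = m (i, j) := rfl

lemma inner_cols (s : E3) (m : E32) (j : Fin 2) : ⟪s, cols m j⟫ = ∑ i, s i * m (i, j) := by
  simp [PiLp.inner_apply, mul_comm]

lemma norm_le_of_cols {a b : E32} {k : ℝ} (hk : 0 ≤ k)
    (h : ∀ j, ‖cols a j‖ ≤ k * ‖cols b j‖) : ‖a‖ ≤ k * ‖b‖ := by
  rw [← cols.norm_map, ← cols.norm_map b, ← sq_le_sq₀ (norm_nonneg _) (by positivity), mul_pow,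
    PiLp.norm_sq_eq_of_L2, PiLp.norm_sq_eq_of_L2, Finset.mul_sum]
  gcongr with j
  rw [← mul_pow]
  exact pow_le_pow_left₀ (norm_nonneg _) (h j) 2

def mapCols (R : E3 ≃ₗᵢ[ℝ] E3) : E32 ≃ₗᵢ[ℝ] E32 :=
  cols.trans ((LinearIsometryEquiv.piLpCongrRight 2 fun _ => R).trans cols.symm)

@[simp] lemma cols_mapCols (R : E3 ≃ₗᵢ[ℝ] E3) (m : E32) (j : Fin 2) :
    cols (mapCols R m) j = R (cols m j) := by
  simp [mapCols]

lemma cols_Pproj (s : E3) (m : E32) (j : Fin 2) :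
    cols (Pproj s m) j = cols m j - ⟪s, cols m j⟫ • s := by
  ext i
  simp [Pproj, PiLp.inner_apply, mul_comm]

@[simp] lemma cols_tens (s : E3) (x : E2) (j : Fin 2) : cols (tens s x) j = x j • s := by
  ext i
  simp [tens, mul_comm]

lemma inner_eq_sum_cols (a b : E32) : ⟪a, b⟫ = ∑ j, ⟪cols a j, cols b j⟫ := by
  rw [← cols.inner_map_map, PiLp.inner_apply]

lemma inner_Pproj_tens {s : E3} (hs : ‖s‖ = 1) (m : E32) (x : E2) :
    ⟪Pproj s m, tens s x⟫ = 0 := by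
  refine (inner_eq_sum_cols _ _).trans (Finset.sum_eq_zero fun j _ => ?_)
  rw [cols_Pproj, cols_tens, inner_sub_left, real_inner_smul_left, real_inner_smul_right,
    real_inner_smul_right, real_inner_self_eq_norm_sq, hs, real_inner_comm]
  ring

lemma Pproj_add_tens (s : E3) (m : E32) :
    Pproj s m + tens s (WithLp.toLp 2 fun j => ⟪s, cols m j⟫) = m := by
  refine cols.injective (PiLp.ext fun j => ?_)
  simp [cols_Pproj]

lemma norm_Pproj_le {s : E3} (hs : ‖s‖ = 1) (m : E32) : ‖Pproj s m‖ ≤ ‖m‖ := by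
  calc ‖Pproj s m‖ ≤ ‖Pproj s m + tens s (WithLp.toLp 2 fun j => ⟪s, cols m j⟫)‖ :=
        norm_le_norm_add_of_inner_eq_zero (inner_Pproj_tens hs m _)
    _ = ‖m‖ := by rw [Pproj_add_tens]

lemma Pproj_add (s : E3) (a b : E32) : Pproj s (a + b) = Pproj s a + Pproj s b := by
  ext p
  simp [Pproj, mul_add, Finset.sum_add_distrib]
  ring

lemma Pproj_mapCols (R : E3 ≃ₗᵢ[ℝ] E3) (s : E3) (m : E32) :
    Pproj (R s) (mapCols R m) = mapCols R (Pproj s m) := by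
  refine cols.injective (PiLp.ext fun j => ?_)
  simp [cols_Pproj]

lemma tens_sub (s : E3) (x y : E2) : tens s (x - y) = tens s x - tens s y := by
  ext p
  simp [tens, mul_sub]

lemma mapCols_tens (R : E3 ≃ₗᵢ[ℝ] E3) (s : E3) (x : E2) :
    mapCols R (tens s x) = tens (R s) x := by
  refine cols.injective (PiLp.ext fun j => ?_)
  simp

lemma norm_tens (s : E3) (x : E2) : ‖tens s x‖ = ‖s‖ * ‖x‖ := by
  rw [← sq_eq_sq₀ (norm_nonneg _) (by positivity), mul_pow, EuclideanSpace.norm_sq_eq,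
    EuclideanSpace.norm_sq_eq, EuclideanSpace.norm_sq_eq, Fintype.sum_prod_type, Finset.sum_mul_sum]
  simp [tens, mul_pow]

lemma Fdens_nonneg {g : ℝ → ℝ} (hg : MapsTo g (Ici 0) (Ici 0)) (r : ℝ) (s : E3) (x : E2)
    (m : E32) : 0 ≤ Fdens g r s x m := by
  have : 0 ≤ g ‖x‖ := hg (norm_nonneg x)
  unfold Fdens
  positivity

lemma Fdens_le {g : ℝ → ℝ} (hg : MapsTo g (Ici 0) (Iic 1)) {r : ℝ} (hr : 0 ≤ r) {s : E3}
    (hs : ‖s‖ = 1) (x : E2) (m : E32) : Fdens g r s x m ≤ 2 * ‖x‖ + (1 + r) * ‖m‖ := by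
  have hg1 : g ‖x‖ ≤ 1 := hg (norm_nonneg x)
  have hP := norm_Pproj_le hs m
  have h3 : ‖r • Pproj s m + tens s x‖ ≤ r * ‖Pproj s m‖ + ‖x‖ := by
    simpa [norm_smul, abs_of_nonneg hr, norm_tens, hs] using norm_add_le (r • Pproj s m) (tens s x)
  unfold Fdens
  nlinarith [norm_nonneg (Pproj s m)]

lemma mul_norm_Pproj_le_Fdens {g : ℝ → ℝ} (hg : MapsTo g (Ici 0) (Ici 0)) {r : ℝ} (hr : 0 ≤ r)
    {s : E3} (hs : ‖s‖ = 1) (x : E2) (m : E32) : r * ‖Pproj s m‖ ≤ Fdens g r s x m := by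
  have h : ‖r • Pproj s m‖ ≤ ‖r • Pproj s m + tens s x‖ := norm_le_norm_add_of_inner_eq_zero <| by
    rw [real_inner_smul_left, inner_Pproj_tens hs, mul_zero]
  rw [norm_smul, Real.norm_eq_abs, abs_of_nonneg hr] at h
  have : 0 ≤ g ‖x‖ := hg (norm_nonneg x)
  unfold Fdens
  nlinarith [norm_nonneg x, norm_nonneg (Pproj s m)]

lemma norm_smul_add_tens_le (R : E3 ≃ₗᵢ[ℝ] E3) {s : E3} (hs : ‖s‖ = 1) {r rb : ℝ} (hrb : 0 ≤ rb)
    (x xb : E2) (p e : E32) :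
    ‖rb • (mapCols R p + e) + tens (R s) xb‖
      ≤ ‖r • p + tens s x‖ + |r - rb| * ‖p‖ + rb * ‖e‖ + ‖x - xb‖ := by
  have hsplit : rb • (mapCols R p + e) + tens (R s) xb
      = mapCols R (r • p + tens s x) + ((rb - r) • mapCols R p + rb • e - tens (R s) (x - xb)) := by
    rw [map_add, map_smul, mapCols_tens, tens_sub]
    module
  have hsR : ‖R s‖ = 1 := by rw [R.norm_map, hs]
  rw [hsplit]
  calc _ ≤ ‖mapCols R (r • p + tens s x)‖
        + (‖(rb - r) • mapCols R p‖ + ‖rb • e‖ + ‖tens (R s) (x - xb)‖) := by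
        refine (norm_add_le _ _).trans (add_le_add_right ((norm_sub_le _ _).trans ?_) _)
        exact add_le_add_left (norm_add_le _ _) _
    _ = _ := by
        simp only [LinearIsometryEquiv.norm_map, norm_smul, Real.norm_eq_abs, abs_of_nonneg hrb,
          norm_tens, hsR, one_mul, abs_sub_comm rb r]
        ring

lemma Fdens_le_Fdens_add {g : ℝ → ℝ} (hg : MapsTo g (Ici 0) (Icc 0 1)) {Kg : NNReal}
    (hgl : LipschitzOnWith Kg g (Ici 0)) {β r rb : ℝ} (hrb : rb ∈ Icc 0 β) {s : E3}
    (hs : ‖s‖ = 1) (R : E3 ≃ₗᵢ[ℝ] E3) (x xb : E2) (m mb : E32) :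
    Fdens g rb (R s) xb mb ≤ Fdens g r s x m + (Kg * ‖x - xb‖ + |r - rb|) * ‖Pproj s m‖
      + (1 + β) * ‖mb - mapCols R m‖ + 2 * ‖x - xb‖ := by
  have hq : Pproj (R s) mb = mapCols R (Pproj s m) + Pproj (R s) (mb - mapCols R m) := by
    rw [← Pproj_mapCols, ← Pproj_add, add_sub_cancel]
  set p := Pproj s m
  set e := Pproj (R s) (mb - mapCols R m)
  have hsR : ‖R s‖ = 1 := by rw [R.norm_map, hs]
  have he : ‖e‖ ≤ ‖mb - mapCols R m‖ := norm_Pproj_le hsR _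
  have hq_le : ‖Pproj (R s) mb‖ ≤ ‖p‖ + ‖e‖ := by
    simpa [hq] using norm_add_le (mapCols R p) e
  have hgx : g ‖xb‖ ≤ g ‖x‖ + Kg * ‖x - xb‖ := by
    have h := (hgl.dist_le_mul _ (norm_nonneg xb) _ (norm_nonneg x)).trans
      (mul_le_mul_of_nonneg_left (dist_norm_norm_le xb x) Kg.coe_nonneg)
    rw [Real.dist_eq, norm_sub_rev] at h
    linarith [le_abs_self (g ‖xb‖ - g ‖x‖)]
  obtain ⟨hgxb0, hgxb1⟩ := hg (norm_nonneg xb)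
  have hterm2 : g ‖xb‖ * ‖Pproj (R s) mb‖ ≤ (g ‖x‖ + Kg * ‖x - xb‖) * ‖p‖ + ‖e‖ := by
    nlinarith [mul_le_mul_of_nonneg_left hq_le hgxb0, norm_nonneg p, norm_nonneg e]
  have hterm3 := norm_smul_add_tens_le R hs (r := r) hrb.1 x xb p e
  rw [← hq] at hterm3
  have hre : rb * ‖e‖ ≤ β * ‖mb - mapCols R m‖ :=
    mul_le_mul hrb.2 he (norm_nonneg e) (hrb.1.trans hrb.2)
  have := norm_le_insert x xb
  unfold Fdens
  linarith

lemma continuous_Fdens {g : ℝ → ℝ} (hg : ContinuousOn g (Ici 0)) (r : ℝ) (s : E3) :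
    Continuous (fun p : E2 × E32 => Fdens g r s p.1 p.2) := by
  have hg' : Continuous fun p : E2 × E32 => g ‖p.1‖ :=
    hg.comp_continuous (continuous_norm.comp continuous_fst) fun p => norm_nonneg p.1
  have hP : Continuous fun p : E2 × E32 => Pproj s p.2 := by unfold Pproj; fun_prop
  have hT : Continuous fun p : E2 × E32 => tens s p.1 := by unfold tens; fun_prop
  exact (continuous_fst.norm.add (hg'.mul hP.norm)).add ((hP.const_smul r).add hT).norm

def gradvCLM : (E2 →L[ℝ] ℝ) →L[ℝ] E2 :=
  LinearMap.toContinuousLinearMap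
    { toFun := fun L => WithLp.toLp 2 fun j => L (EuclideanSpace.single j 1)
      map_add' := fun _ _ => rfl
      map_smul' := fun _ _ => rfl }

def gradmCLM : (E2 →L[ℝ] E3) →L[ℝ] E32 :=
  LinearMap.toContinuousLinearMap
    { toFun := fun L => WithLp.toLp 2 fun p => L (EuclideanSpace.single p.2 1) p.1
      map_add' := fun _ _ => rfl
      map_smul' := fun _ _ => rfl }

lemma gradv_eq (φ : E2 → ℝ) (y : E2) : gradv φ y = gradvCLM (fderiv ℝ φ y) := rfl

lemma gradm_eq (ψ : E2 → E3) (y : E2) : gradm ψ y = gradmCLM (fderiv ℝ ψ y) := rfl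

lemma gradm_comp_linearIsometryEquiv (R : E3 ≃ₗᵢ[ℝ] E3) (ψ : E2 → E3) (y : E2) :
    gradm (fun x => R (ψ x)) y = mapCols R (gradm ψ y) := by
  have h : fderiv ℝ (fun x => R (ψ x)) y = (R : E3 →L[ℝ] E3).comp (fderiv ℝ ψ y) :=
    R.toContinuousLinearEquiv.comp_fderiv
  refine cols.injective (PiLp.ext fun j => ?_)
  ext i
  simp [gradm, h]
  rfl

lemma volume_cubeQ : volume cubeQ = 1 := by
  have h : cubeQ = WithLp.ofLp ⁻¹' univ.pi (fun _ : Fin 2 => Ioo (-(1/2) : ℝ) (1/2)) := by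
    ext y; simp [cubeQ]
  rw [h, (PiLp.volume_preserving_ofLp (Fin 2)).measure_preimage
    (MeasurableSet.univ_pi fun _ => measurableSet_Ioo).nullMeasurableSet, Real.volume_pi_Ioo]
  norm_num

instance isFiniteMeasure_restrict_cubeQ : IsFiniteMeasure (volume.restrict cubeQ) :=
  isFiniteMeasure_restrict.2 (by rw [volume_cubeQ]; exact ENNReal.one_ne_top)

lemma integrableOn_Fdens_grad {g : ℝ → ℝ} (hg : MapsTo g (Ici 0) (Icc 0 1))
    (hgc : ContinuousOn g (Ici 0)) {r : ℝ} (hr : 0 ≤ r) {s : E3} (hs : ‖s‖ = 1) (ξ : E2)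
    (η : E32) {φ : E2 → ℝ} {ψ : E2 → E3} {K₁ K₂ : NNReal} (hφ : LipschitzWith K₁ φ)
    (hψ : LipschitzWith K₂ ψ) :
    IntegrableOn (fun y => Fdens g r s (ξ + gradv φ y) (η + gradm ψ y)) cubeQ := by
  have hmeas : Measurable fun y => (ξ + gradv φ y, η + gradm ψ y) :=
    ((gradvCLM.continuous.measurable.comp (measurable_fderiv ℝ φ)).const_add ξ).prodMk
      ((gradmCLM.continuous.measurable.comp (measurable_fderiv ℝ ψ)).const_add η)
  refine Integrable.of_bound (μ := volume.restrict cubeQ)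
    ((continuous_Fdens hgc r s).measurable.comp hmeas).aestronglyMeasurable
    (2 * (‖ξ‖ + ‖gradvCLM‖ * K₁) + (1 + r) * (‖η‖ + ‖gradmCLM‖ * K₂)) (ae_of_all _ fun y => ?_)
  have hv : ‖ξ + gradv φ y‖ ≤ ‖ξ‖ + ‖gradvCLM‖ * K₁ := by
    rw [gradv_eq]
    exact norm_add_le_of_le le_rfl (gradvCLM.le_opNorm_of_le (norm_fderiv_le_of_lipschitz ℝ hφ))
  have hm : ‖η + gradm ψ y‖ ≤ ‖η‖ + ‖gradmCLM‖ * K₂ := by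
    rw [gradm_eq]
    exact norm_add_le_of_le le_rfl (gradmCLM.le_opNorm_of_le (norm_fderiv_le_of_lipschitz ℝ hψ))
  rw [Real.norm_eq_abs, abs_of_nonneg (Fdens_nonneg (hg.mono_right Icc_subset_Ici_self) _ _ _ _)]
  refine (Fdens_le (hg.mono_right Icc_subset_Iic_self) hr hs _ _).trans ?_
  gcongr

lemma norm_mapCols_sub_le {R : E3 ≃ₗᵢ[ℝ] E3} {s : E3} {k : ℝ} (hk : 0 ≤ k)
    (hR : ∀ v, ⟪s, v⟫ = 0 → ‖R v - v‖ ≤ k * ‖v‖) {η : E32} (hη : ∀ j, ⟪s, cols η j⟫ = 0) :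
    ‖mapCols R η - η‖ ≤ k * ‖η‖ :=
  norm_le_of_cols hk fun j => by simpa using hR _ (hη j)

lemma csInf_le_mul_csInf_add {S T : Set ℝ} (hS : S.Nonempty) (hT : BddBelow T) {k a : ℝ}
    (hk : 0 < k) (h : ∀ v ∈ S, ∃ w ∈ T, w ≤ k * v + a) : sInf T ≤ k * sInf S + a := by
  have : (sInf T - a) / k ≤ sInf S := le_csInf hS fun v hv => by
    obtain ⟨w, hw, hwv⟩ := h v hv
    rw [div_le_iff₀ hk]
    linarith [csInf_le hT hw]
  rw [div_le_iff₀ hk] at this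
  linarith

def admissibleEnergies (g : ℝ → ℝ) (r : ℝ) (s : E3) (ξ : E2) (η : E32) : Set ℝ :=
  {v : ℝ | ∃ φ : E2 → ℝ, ∃ ψ : E2 → E3,
    (∃ K : NNReal, LipschitzWith K φ) ∧ (∃ K : NNReal, LipschitzWith K ψ) ∧
    (∀ y ∉ cubeQ, φ y = 0) ∧ (∀ y ∉ cubeQ, ψ y = 0) ∧
    v = ∫ y in cubeQ, Fdens g r s (ξ + gradv φ y) (η + gradm ψ y)}

lemma QF_eq_sInf (g : ℝ → ℝ) (r : ℝ) (s : E3) (ξ : E2) (η : E32) :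
    QF g r s ξ η = sInf (admissibleEnergies g r s ξ η) := rfl

lemma Fdens_mem_admissibleEnergies (g : ℝ → ℝ) (r : ℝ) (s : E3) (ξ : E2) (η : E32) :
    Fdens g r s ξ η ∈ admissibleEnergies g r s ξ η := by
  refine ⟨0, 0, ⟨0, LipschitzWith.const' 0⟩, ⟨0, LipschitzWith.const' 0⟩, fun _ _ => rfl,
    fun _ _ => rfl, ?_⟩
  simp [gradv_eq, gradm_eq, measureReal_def, volume_cubeQ]

lemma bddBelow_admissibleEnergies {g : ℝ → ℝ} (hg : MapsTo g (Ici 0) (Ici 0)) (r : ℝ) (s : E3)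
    (ξ : E2) (η : E32) : BddBelow (admissibleEnergies g r s ξ η) := by
  refine ⟨0, ?_⟩
  rintro _ ⟨φ, ψ, -, -, -, -, rfl⟩
  exact integral_nonneg fun y => Fdens_nonneg hg _ _ _ _

lemma QF_le_Fdens {g : ℝ → ℝ} (hg : MapsTo g (Ici 0) (Ici 0)) (r : ℝ) (s : E3) (ξ : E2)
    (η : E32) : QF g r s ξ η ≤ Fdens g r s ξ η :=
  csInf_le (bddBelow_admissibleEnergies hg r s ξ η) (Fdens_mem_admissibleEnergies g r s ξ η)

lemma Fdens_le_mul_Fdens_add {g : ℝ → ℝ} (hg : MapsTo g (Ici 0) (Icc 0 1)) {Kg : NNReal}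
    (hgl : LipschitzOnWith Kg g (Ici 0)) {α β r rb : ℝ} (hα : 0 < α) (hr : α ≤ r)
    (hrb : rb ∈ Icc 0 β) {s : E3} (hs : ‖s‖ = 1) (R : E3 ≃ₗᵢ[ℝ] E3) (ξ ξb L : E2)
    (η ηb m : E32) :
    Fdens g rb (R s) (ξb + L) (ηb + mapCols R m)
      ≤ (1 + (Kg * ‖ξ - ξb‖ + |r - rb|) / α) * Fdens g r s (ξ + L) (η + m)
        + ((1 + β) * ‖ηb - mapCols R η‖ + 2 * ‖ξ - ξb‖) := by
  have hF := Fdens_le_Fdens_add hg hgl (r := r) hrb hs R (ξ + L) (ξb + L) (η + m)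
    (ηb + mapCols R m)
  rw [add_sub_add_right_eq_sub, map_add, add_sub_add_right_eq_sub] at hF
  set B := Kg * ‖ξ - ξb‖ + |r - rb|
  have hP : α * ‖Pproj s (η + m)‖ ≤ Fdens g r s (ξ + L) (η + m) :=
    (mul_le_mul_of_nonneg_right hr (norm_nonneg _)).trans
      (mul_norm_Pproj_le_Fdens (hg.mono_right Icc_subset_Ici_self) (hα.le.trans hr) hs _ _)
  have hB : B * ‖Pproj s (η + m)‖ ≤ B / α * Fdens g r s (ξ + L) (η + m) := by
    calc B * ‖Pproj s (η + m)‖ = B / α * (α * ‖Pproj s (η + m)‖) := by field_simp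
      _ ≤ B / α * Fdens g r s (ξ + L) (η + m) := by gcongr
  linarith

lemma QF_le_mul_QF_add {g : ℝ → ℝ} (hg : MapsTo g (Ici 0) (Icc 0 1)) {Kg : NNReal}
    (hgl : LipschitzOnWith Kg g (Ici 0)) {α β r rb : ℝ} (hα : 0 < α) (hr : r ∈ Icc α β)
    (hrb : rb ∈ Icc α β) {s sb : E3} (hs : ‖s‖ = 1) (hsb : ‖sb‖ = 1) (ξ ξb : E2) {η : E32}
    (hη : ∀ j, ⟪s, cols η j⟫ = 0) (ηb : E32) :
    QF g rb sb ξb ηb ≤ (1 + (Kg * ‖ξ - ξb‖ + |r - rb|) / α) * QF g r s ξ η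
      + ((1 + β) * (‖η - ηb‖ + 2 * ‖s - sb‖ * ‖η‖) + 2 * ‖ξ - ξb‖) := by
  obtain ⟨R, rfl, hR⟩ := exists_linearIsometryEquiv_apply_eq hs hsb
  set B := Kg * ‖ξ - ξb‖ + |r - rb|
  set A := (1 + β) * (‖η - ηb‖ + 2 * ‖s - R s‖ * ‖η‖) + 2 * ‖ξ - ξb‖
  have hg0 : MapsTo g (Ici 0) (Ici 0) := hg.mono_right Icc_subset_Ici_self
  have hr0 : 0 ≤ r := hα.le.trans hr.1
  have hβ : 0 ≤ 1 + β := by linarith [hr.2]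
  have hRη : ‖ηb - mapCols R η‖ ≤ ‖η - ηb‖ + 2 * ‖s - R s‖ * ‖η‖ := by
    calc ‖ηb - mapCols R η‖ = ‖(η - ηb) + (mapCols R η - η)‖ := by
          rw [← norm_neg]; congr 1; abel
      _ ≤ _ := norm_add_le_of_le le_rfl (norm_mapCols_sub_le (by positivity) hR hη)
  have hpt (L : E2) (m : E32) :
      Fdens g rb (R s) (ξb + L) (ηb + mapCols R m)
        ≤ (1 + B / α) * Fdens g r s (ξ + L) (η + m) + A :=
    (Fdens_le_mul_Fdens_add hg hgl hα hr.1 ⟨hα.le.trans hrb.1, hrb.2⟩ hs R ξ ξb L η ηb m).trans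
      (by linarith [mul_le_mul_of_nonneg_left hRη hβ])
  rw [QF_eq_sInf, QF_eq_sInf]
  refine csInf_le_mul_csInf_add ⟨_, Fdens_mem_admissibleEnergies g r s ξ η⟩
    (bddBelow_admissibleEnergies hg0 _ _ _ _) (by positivity) ?_
  rintro _ ⟨φ, ψ, ⟨K₁, hφ⟩, ⟨K₂, hψ⟩, hφ0, hψ0, rfl⟩
  refine ⟨_, ⟨φ, fun x => R (ψ x), ⟨K₁, hφ⟩, ⟨1 * K₂, R.lipschitz.comp hψ⟩, hφ0,
    fun y hy => by simp [hψ0 y hy], rfl⟩, ?_⟩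
  have hint := integrableOn_Fdens_grad hg hgl.continuousOn hr0 hs ξ η hφ hψ
  calc ∫ y in cubeQ, Fdens g rb (R s) (ξb + gradv φ y) (ηb + gradm (fun x => R (ψ x)) y)
      ≤ ∫ y in cubeQ, ((1 + B / α) * Fdens g r s (ξ + gradv φ y) (η + gradm ψ y) + A) := by
        refine integral_mono_of_nonneg (ae_of_all _ fun y => Fdens_nonneg hg0 _ _ _ _)
          ((hint.const_mul _).add (integrable_const A)) (ae_of_all _ fun y => ?_)
        simpa only [gradm_comp_linearIsometryEquiv] using hpt (gradv φ y) (gradm ψ y)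
    _ = (1 + B / α) * (∫ y in cubeQ, Fdens g r s (ξ + gradv φ y) (η + gradm ψ y)) + A := by
        rw [integral_add (hint.const_mul _) (integrable_const A), integral_const_mul,
          setIntegral_const, measureReal_def, volume_cubeQ, ENNReal.toReal_one, one_smul]

lemma QF_sub_QF_le {g : ℝ → ℝ} (hg : MapsTo g (Ici 0) (Icc 0 1)) {Kg : NNReal}
    (hgl : LipschitzOnWith Kg g (Ici 0)) {α β r rb : ℝ} (hα : 0 < α) (hr : r ∈ Icc α β)
    (hrb : rb ∈ Icc α β) {s sb : E3} (hs : ‖s‖ = 1) (hsb : ‖sb‖ = 1) (ξ ξb : E2) {η : E32}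
    (hη : ∀ j, ⟪s, cols η j⟫ = 0) (ηb : E32) :
    QF g rb sb ξb ηb - QF g r s ξ η ≤
      (2 + β) * ((Kg + 1) / α + 2) * ‖η - ηb‖ + (2 + β) * ((Kg + 1) / α + 2) *
        ((|r - rb| + ‖s - sb‖ + ‖ξ - ξb‖) * (1 + ‖ξ‖ + ‖ξb‖ + ‖η‖ + ‖ηb‖)) := by
  set δ := |r - rb| + ‖s - sb‖ + ‖ξ - ξb‖
  set N := 1 + ‖ξ‖ + ‖ξb‖ + ‖η‖ + ‖ηb‖
  have hβ : 0 ≤ β := hα.le.trans (hr.1.trans hr.2)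
  have hδ : |r - rb| ≤ δ ∧ ‖s - sb‖ ≤ δ ∧ ‖ξ - ξb‖ ≤ δ := by
    refine ⟨?_, ?_, ?_⟩ <;>
      linarith [abs_nonneg (r - rb), norm_nonneg (s - sb), norm_nonneg (ξ - ξb)]
  have hN : 1 ≤ N ∧ ‖ξ‖ + ‖η‖ ≤ N ∧ ‖η‖ ≤ N := by
    refine ⟨?_, ?_, ?_⟩ <;>
      linarith [norm_nonneg ξ, norm_nonneg ξb, norm_nonneg η, norm_nonneg ηb]
  have hQ : QF g r s ξ η ≤ (2 + β) * N := by
    refine (QF_le_Fdens (hg.mono_right Icc_subset_Ici_self) r s ξ η).trans ?_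
    refine (Fdens_le (hg.mono_right Icc_subset_Iic_self) (hα.le.trans hr.1) hs ξ η).trans ?_
    linarith [mul_le_mul hr.2 hN.2.2 (norm_nonneg η) hβ, norm_nonneg η]
  have hB : (Kg * ‖ξ - ξb‖ + |r - rb|) / α * QF g r s ξ η
      ≤ (Kg + 1) * δ / α * ((2 + β) * N) := by
    refine (mul_le_mul_of_nonneg_left hQ (by positivity)).trans ?_
    gcongr
    linarith [mul_le_mul_of_nonneg_left hδ.2.2 Kg.coe_nonneg]
  have hsη : (1 + β) * (‖s - sb‖ * ‖η‖) ≤ (1 + β) * (δ * N) := by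
    gcongr
    exacts [hδ.2.1, hN.2.2]
  have hξ : ‖ξ - ξb‖ ≤ δ * N := hδ.2.2.trans (le_mul_of_one_le_right (by positivity) hN.1)
  have hηη : (1 + β) * ‖η - ηb‖ ≤ (2 + β) * ((Kg + 1) / α + 2) * ‖η - ηb‖ := by
    gcongr
    nlinarith [show 0 ≤ (Kg + 1 : ℝ) / α by positivity]
  have h := QF_le_mul_QF_add hg hgl hα hr hrb hs hsb ξ ξb hη ηb
  have hc : (Kg + 1) * δ / α * ((2 + β) * N) + 2 * (2 + β) * (δ * N)
      = (2 + β) * ((Kg + 1) / α + 2) * (δ * N) := by ring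
  linarith

theorem stmt15_general (α β : ℝ) (hα : 0 < α) (hαβ : α ≤ β) (g : ℝ → ℝ)
    (hg_pos : ∀ t : ℝ, 0 ≤ t → 0 < g t ∧ g t ≤ 1)
    (hg_lip : ∃ K : NNReal, LipschitzOnWith K g (Set.Ici 0)) :
    ∃ c : ℝ, 0 < c ∧
      ∀ r rb : ℝ, r ∈ Set.Icc α β → rb ∈ Set.Icc α β →
      ∀ s sb : E3, ‖s‖ = 1 → ‖sb‖ = 1 →
      ∀ ξ ξb : E2, ∀ η ηb : E32,
      (∀ j : Fin 2, ∑ i : Fin 3, s i * η (i, j) = 0) →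
      (∀ j : Fin 2, ∑ i : Fin 3, sb i * ηb (i, j) = 0) →
      |QF g r s ξ η - QF g rb sb ξb ηb| ≤
        c * ‖η - ηb‖ +
          c * ((|r - rb| + ‖s - sb‖ + ‖ξ - ξb‖) *
            (1 + ‖ξ‖ + ‖ξb‖ + ‖η‖ + ‖ηb‖)) := by
  obtain ⟨Kg, hgl⟩ := hg_lip
  have hg : MapsTo g (Ici 0) (Icc 0 1) := fun t ht => ⟨(hg_pos t ht).1.le, (hg_pos t ht).2⟩
  refine ⟨(2 + β) * ((Kg + 1) / α + 2), by have := hα.trans_le hαβ; positivity, ?_⟩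
  intro r rb hr hrb s sb hs hsb ξ ξb η ηb hη hηb
  rw [abs_sub_le_iff]
  constructor
  · have h := QF_sub_QF_le hg hgl hα hrb hr hsb hs ξb ξ
      (fun j => (inner_cols sb ηb j).trans (hηb j)) η
    rw [norm_sub_rev ηb, abs_sub_comm rb, norm_sub_rev sb, norm_sub_rev ξb] at h
    linarith
  · exact QF_sub_QF_le hg hgl hα hr hrb hs hsb ξ ξb (fun j => (inner_cols s η j).trans (hη j)) ηb

theorem stmt15 (α β : ℝ) (hα : 0 < α) (hαβ : α ≤ β) (g : ℝ → ℝ)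
    (hg_pos : ∀ t : ℝ, 0 ≤ t → 0 < g t ∧ g t ≤ 1)
    (hg_mono : ∀ t₁ t₂ : ℝ, 0 ≤ t₁ → t₁ ≤ t₂ → g t₂ ≤ g t₁)
    (hg_lip : ∃ K : NNReal, LipschitzOnWith K g (Set.Ici 0)) :
    ∃ c : ℝ, 0 < c ∧
      ∀ r rb : ℝ, r ∈ Set.Icc α β → rb ∈ Set.Icc α β →
      ∀ s sb : E3, ‖s‖ = 1 → ‖sb‖ = 1 →
      ∀ ξ ξb : E2, ∀ η ηb : E32,
      (∀ j : Fin 2, ∑ i : Fin 3, s i * η (i, j) = 0) →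
      (∀ j : Fin 2, ∑ i : Fin 3, sb i * ηb (i, j) = 0) →
      |QF g r s ξ η - QF g rb sb ξb ηb| ≤
        c * ‖η - ηb‖ +
          c * ((|r - rb| + ‖s - sb‖ + ‖ξ - ξb‖) *
            (1 + ‖ξ‖ + ‖ξb‖ + ‖η‖ + ‖ηb‖)) :=
  stmt15_general α β hα hαβ g hg_pos hg_lip
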